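/- arXiv:2104.12393 — 2 statements merged into one kernel-verified Lean document; each statement's English description precedes it below -/
import Mathlib

section
/- Let (X,d) be a complete metric space and let F be a multivalued mapping from X to X with closed values such that: (i) for every sequence (x_n) converging to a point x ∈ X with lim_n d(F(x_n),x_n) = 0 one has d(F(x),x) = 0; (ii) for some α < 1, α ≥ 0, for each x ∈ X there exists y ∈ F(x) with d(F(y),y) ≤ α d(F(x),x); and (iii) the closure of F(X) = ⋃_{x∈X} F(x) is compact. Then F has a fixed point. -/
open Metric Filter Topology

/-
Choosing `y ∈ F x` as in (ii) gives a map `g` along whose orbit the defect `d(F x, x)` decays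
geometrically. The orbit (after one step) lies in `⋃ x, F x`, so by compactness a subsequence
converges to some `x`; by (i) `d(F x, x) = 0`, and `F x` is closed, so `x ∈ F x`.
-/

section Iterate

variable {X : Type*} {f : X → ℝ} {g : X → X} {α : ℝ}

theorem apply_iterate_le_pow_mul (hα : 0 ≤ α) (hg : ∀ x, f (g x) ≤ α * f x) (x : X) (n : ℕ) :
    f (g^[n] x) ≤ α ^ n * f x := by
  induction n with
  | zero => simp
  | succ n ih =>
    calc f (g^[n + 1] x) = f (g (g^[n] x)) := by rw [Function.iterate_succ_apply']
      _ ≤ α * f (g^[n] x) := hg _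
      _ ≤ α * (α ^ n * f x) := mul_le_mul_of_nonneg_left ih hα
      _ = α ^ (n + 1) * f x := by ring

theorem tendsto_apply_iterate_zero (hf : ∀ x, 0 ≤ f x) (hα : 0 ≤ α) (hα1 : α < 1)
    (hg : ∀ x, f (g x) ≤ α * f x) (x : X) :
    Tendsto (fun n => f (g^[n] x)) atTop (𝓝 0) := by
  have hgeom : Tendsto (fun n => α ^ n * f x) atTop (𝓝 0) := by
    simpa using (tendsto_pow_atTop_nhds_zero_of_lt_one hα hα1).mul_const (f x)
  exact squeeze_zero (fun n => hf _) (apply_iterate_le_pow_mul hα hg x) hgeom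

end Iterate

theorem exists_mem_self_of_tendsto_infDist {X : Type*} [MetricSpace X] {F : X → Set X}
    (hFne : ∀ x, (F x).Nonempty) (hFcl : ∀ x, IsClosed (F x))
    (hreg : ∀ (u : ℕ → X) (x : X), Tendsto u atTop (𝓝 x) →
      Tendsto (fun n => infDist (u n) (F (u n))) atTop (𝓝 0) → infDist x (F x) = 0)
    {K : Set X} (hK : IsCompact K) {u : ℕ → X} (huK : ∀ n, u n ∈ K)
    (hu : Tendsto (fun n => infDist (u n) (F (u n))) atTop (𝓝 0)) :
    ∃ x, x ∈ F x := by
  obtain ⟨x, -, φ, hφ, hux⟩ := hK.tendsto_subseq huK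
  have hx : infDist x (F x) = 0 := hreg (u ∘ φ) x hux (hu.comp hφ.tendsto_atTop)
  exact ⟨x, ((hFcl x).mem_iff_infDist_zero (hFne x)).2 hx⟩

theorem fixed_point_of_contractive_dist_compact_range_general
    {X : Type*} [MetricSpace X] [Nonempty X]
    (F : X → Set X) (hFne : ∀ x, (F x).Nonempty) (hFcl : ∀ x, IsClosed (F x))
    (hreg : ∀ (u : ℕ → X) (x : X), Tendsto u atTop (nhds x) →
      Tendsto (fun n => infDist (u n) (F (u n))) atTop (nhds 0) →
      infDist x (F x) = 0)
    (α : ℝ) (hα : 0 ≤ α) (hα1 : α < 1)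
    (hF : ∀ x : X, ∃ y ∈ F x, infDist y (F y) ≤ α * infDist x (F x))
    (hcpt : IsCompact (closure (⋃ x : X, F x))) :
    ∃ x : X, x ∈ F x := by
  choose g hgF hg using hF
  obtain ⟨x₀⟩ := ‹Nonempty X›
  have horbit : ∀ n, g^[n] (g x₀) ∈ closure (⋃ x, F x) := fun n => by
    rw [← Function.iterate_succ_apply, Function.iterate_succ_apply']
    exact subset_closure (Set.mem_iUnion.2 ⟨_, hgF _⟩)
  exact exists_mem_self_of_tendsto_infDist hFne hFcl hreg hcpt horbit
    (tendsto_apply_iterate_zero (f := fun x => infDist x (F x)) (fun _ => infDist_nonneg)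
      hα hα1 hg (g x₀))

/-- **Theorem 1.7.** Let `(X,d)` be a complete metric space and `F` a multivalued mapping
from `X` to `X` with nonempty closed values such that:
(i) for every sequence `xₙ → x` with `d(F(xₙ),xₙ) → 0` one has `d(F(x),x) = 0`;
(ii) for some `0 ≤ α < 1`, for each `x ∈ X` there exists `y ∈ F x` with
`d(F(y),y) ≤ α·d(F(x),x)`; and (iii) the closure of `F(X) = ⋃ x, F x` is compact.
Then `F` has a fixed point. -/
theorem fixed_point_of_contractive_dist_compact_range
    {X : Type*} [MetricSpace X] [CompleteSpace X] [Nonempty X]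
    (F : X → Set X) (hFne : ∀ x, (F x).Nonempty) (hFcl : ∀ x, IsClosed (F x))
    (hreg : ∀ (u : ℕ → X) (x : X), Tendsto u atTop (nhds x) →
      Tendsto (fun n => infDist (u n) (F (u n))) atTop (nhds 0) →
      infDist x (F x) = 0)
    (α : ℝ) (hα : 0 ≤ α) (hα1 : α < 1)
    (hF : ∀ x : X, ∃ y ∈ F x, infDist y (F y) ≤ α * infDist x (F x))
    (hcpt : IsCompact (closure (⋃ x : X, F x))) :
    ∃ x : X, x ∈ F x :=
  fixed_point_of_contractive_dist_compact_range_general F hFne hFcl hreg α hα hα1 hF hcpt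
end

section
/- Let (Y,d) be a metric space, X ⊆ Y a nonempty subset, and δ a metric on X such that (X,δ) is a complete metric space. Let F be a multivalued mapping from X to Y such that the function x ↦ d(x,F(x)) is lower semicontinuous on (X,δ), and such that for each x ∈ X with x ∉ F(x) there exists z ∈ X with z ≠ x and δ(x,z) ≤ d(x,F(x)) − d(z,F(z)). Then F has a fixed point. -/
open Metric Filter Topology

/-!
Caristi's fixed point theorem in the form of the Brøndsted order `x ≼ z ↔ dist x z ≤ f x - f z`:
for a lower semicontinuous `f` bounded below on a complete space, choose `u (n + 1) ≽ u n` with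
`f (u (n + 1))` within `2⁻ⁿ` of the infimum of `f` over the `≼`-upper set of `u n`. These upper
sets are closed, nested, and of diameter `≤ 2 ⋅ 2⁻ⁿ`, so they meet in a point `x` that is maximal
for `≼`. Applied to `x ↦ d(x, F x)` on `(X, δ)`, the hypothesis says exactly that a non-fixed
point is not maximal.
-/

section Caristi

variable {α : Type*} [MetricSpace α] (f : α → ℝ)

def caristiSet (x : α) : Set α := {z | dist x z ≤ f x - f z}

variable {f}

theorem self_mem_caristiSet (x : α) : x ∈ caristiSet f x := by
  simp [caristiSet]

theorem caristiSet_subset {x y : α} (hy : y ∈ caristiSet f x) :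
    caristiSet f y ⊆ caristiSet f x := fun z hz =>
  calc dist x z ≤ dist x y + dist y z := dist_triangle x y z
    _ ≤ (f x - f y) + (f y - f z) := add_le_add hy hz
    _ = f x - f z := by ring

theorem LowerSemicontinuous.isClosed_caristiSet (hf : LowerSemicontinuous f) (x : α) :
    IsClosed (caristiSet f x) := by
  have hlsc : LowerSemicontinuous fun z => dist x z + f z :=
    (continuous_const.dist continuous_id).lowerSemicontinuous.add hf
  convert hlsc.isClosed_preimage (f x) using 1
  ext z
  exact (le_sub_iff_add_le : dist x z ≤ f x - f z ↔ dist x z + f z ≤ f x)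

theorem exists_mem_caristiSet_subset_closedBall (hf : BddBelow (Set.range f)) (x : α)
    {ε : ℝ} (hε : 0 < ε) : ∃ y ∈ caristiSet f x, caristiSet f y ⊆ closedBall y ε := by
  have hbdd : BddBelow (f '' caristiSet f x) := hf.mono (Set.image_subset_range _ _)
  obtain ⟨_, ⟨y, hy, rfl⟩, hy_lt⟩ := exists_lt_of_csInf_lt (s := f '' caristiSet f x)
    ⟨f x, x, self_mem_caristiSet x, rfl⟩ (lt_add_of_pos_right (sInf (f '' caristiSet f x)) hε)
  refine ⟨y, hy, fun z hz => ?_⟩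
  have hz_inf : sInf (f '' caristiSet f x) ≤ f z :=
    csInf_le hbdd ⟨z, caristiSet_subset hy hz, rfl⟩
  rw [mem_closedBall, dist_comm]
  linarith [show dist y z ≤ f y - f z from hz]

theorem exists_seq_caristiSet_subset_closedBall (hf : BddBelow (Set.range f)) (x₀ : α) :
    ∃ u : ℕ → α, (∀ n, u (n + 1) ∈ caristiSet f (u n)) ∧
      ∀ n, caristiSet f (u n) ⊆ closedBall (u n) ((1 / 2) ^ n) := by
  choose g hg_mem hg_ball using fun (x : α) (n : ℕ) =>
    exists_mem_caristiSet_subset_closedBall hf x (pow_pos (one_half_pos (α := ℝ)) n)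
  let u : ℕ → α := fun n => Nat.rec (g x₀ 0) (fun n x => g x (n + 1)) n
  refine ⟨u, fun n => hg_mem (u n) (n + 1), fun n => ?_⟩
  cases n with
  | zero => exact hg_ball x₀ 0
  | succ n => exact hg_ball (u n) (n + 1)

theorem LowerSemicontinuous.exists_caristiSet_eq_singleton [CompleteSpace α] [Nonempty α]
    (hf : LowerSemicontinuous f) (hf_bdd : BddBelow (Set.range f)) :
    ∃ x, caristiSet f x = {x} := by
  obtain ⟨u, hu_mem, hu_ball⟩ :=
    exists_seq_caristiSet_subset_closedBall hf_bdd (Classical.arbitrary α)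
  set s : ℕ → Set α := fun n => caristiSet f (u n)
  have hs_anti : Antitone s := antitone_nat_of_succ_le fun n => caristiSet_subset (hu_mem n)
  have hs_bdd (n : ℕ) : Bornology.IsBounded (s n) := isBounded_closedBall.subset (hu_ball n)
  have hs_diam (n : ℕ) : diam (s n) ≤ 2 * (1 / 2) ^ n :=
    (diam_mono (hu_ball n) isBounded_closedBall).trans (diam_closedBall (by positivity))
  have hs_diam_lim : Tendsto (fun n => diam (s n)) atTop (𝓝 0) := by
    refine squeeze_zero (fun n => diam_nonneg) hs_diam ?_
    simpa using (tendsto_pow_atTop_nhds_zero_of_lt_one (by norm_num : (0 : ℝ) ≤ 1 / 2)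
      (by norm_num)).const_mul 2
  obtain ⟨x, hx⟩ := nonempty_iInter_of_nonempty_biInter (fun n => hf.isClosed_caristiSet (u n))
    hs_bdd (fun N => ⟨u N, Set.mem_iInter₂.2 fun n hn => hs_anti hn (self_mem_caristiSet _)⟩)
    hs_diam_lim
  rw [Set.mem_iInter] at hx
  refine ⟨x, Set.Subset.antisymm (fun z hz => ?_) (Set.singleton_subset_iff.2 (self_mem_caristiSet x))⟩
  have hxz : ∀ n, dist x z ≤ diam (s n) := fun n =>
    dist_le_diam_of_mem (hs_bdd n) (hx n) (caristiSet_subset (hx n) hz)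
  exact (dist_le_zero.1 (ge_of_tendsto' hs_diam_lim hxz)).symm

end Caristi

theorem fixed_point_of_infDist_tool_general
    {Y : Type*} [MetricSpace Y] (X : Set Y) (hX : X.Nonempty)
    (mδ : MetricSpace X)
    (hcomplete : @CompleteSpace X mδ.toUniformSpace)
    (F : X → Set Y)
    (hlsc : @LowerSemicontinuous X _ mδ.toUniformSpace.toTopologicalSpace _
      (fun x : X => infDist (x : Y) (F x)))
    (hcond : ∀ x : X, (x : Y) ∉ F x → ∃ z : X, z ≠ x ∧
      mδ.dist x z ≤ infDist (x : Y) (F x) - infDist (z : Y) (F z)) :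
    ∃ x : X, (x : Y) ∈ F x := by
  have : Nonempty X := hX.to_subtype
  obtain ⟨x, hx⟩ := hlsc.exists_caristiSet_eq_singleton ⟨0, by
    rintro _ ⟨y, rfl⟩
    exact infDist_nonneg⟩
  by_contra hfix
  obtain ⟨z, hzx, hz⟩ := hcond x fun hx_mem => hfix ⟨x, hx_mem⟩
  exact hzx (hx.subset hz)

/-- **Theorem 3.3.** Let `(Y,d)` be a metric space, `X ⊆ Y` a nonempty subset, and `δ` a
metric on `X` making `(X,δ)` a complete metric space. If `F` is a multivalued mapping
from `X` to `Y` (nonempty values) such that `x ↦ d(x,F(x))` is lower semicontinuous on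
`(X,δ)` and for each `x ∈ X` with `x ∉ F(x)` there exists `z ∈ X`, `z ≠ x`, with
`δ(x,z) ≤ d(x,F(x)) − d(z,F(z))`, then `F` has a fixed point. -/
theorem fixed_point_of_infDist_tool
    {Y : Type*} [MetricSpace Y] (X : Set Y) (hX : X.Nonempty)
    (mδ : MetricSpace X)
    (hcomplete : @CompleteSpace X mδ.toUniformSpace)
    (F : X → Set Y) (hFne : ∀ x, (F x).Nonempty)
    (hlsc : @LowerSemicontinuous X _ mδ.toUniformSpace.toTopologicalSpace _
      (fun x : X => infDist (x : Y) (F x)))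
    (hcond : ∀ x : X, (x : Y) ∉ F x → ∃ z : X, z ≠ x ∧
      mδ.dist x z ≤ infDist (x : Y) (F x) - infDist (z : Y) (F z)) :
    ∃ x : X, (x : Y) ∈ F x :=
  fixed_point_of_infDist_tool_general X hX mδ hcomplete F hlsc hcond
end
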